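/- arXiv:2307.07248 — 2 statements merged into one kernel-verified Lean document; each statement's English description precedes it below -/
import Mathlib

section
/- Let n ≥ 5 be odd and let P = (x_0,...,x_n) be an almost balanced population as above. Call a balanced position k a hot-candidate if at least n/16 of the individuals with a one-bit in the hot position have a zero-bit at position k. Then there are at least n/8 hot-candidate positions. -/
/-!
Write `n = 2t + 1`, let `S` be the `t + 2` individuals with a one-bit in the hot position,
and let `Z k` count those of them with a zero-bit at position `k`. Individual `i` has `n - i`
zero-bits and these numbers are pairwise distinct, so `∑ k, Z k ≥ 0 + 1 + ⋯ + (t + 1)`.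
On the other hand `Z hot = 0`, `Z cold ≤ t + 2`, a balanced position has only `t + 1` zeros in
total, and at a balanced non-candidate `16 Z k < 2t + 1` forces `Z k ≤ t / 8` by integrality.
Summing these bounds leaves room for fewer than `n / 8` candidates only when `t < 2`.
-/

/-- Hamming distance between two bit strings. -/
def hamming {n : ℕ} (x y : Fin n → Bool) : ℕ :=
  (Finset.univ.filter (fun k => x k ≠ y k)).card

/-- Total Hamming distance of a population: sum over all pairs i < j. -/
def totalHamming {m n : ℕ} (P : Fin m → Fin n → Bool) : ℕ :=
  ∑ p ∈ Finset.univ.filter (fun p : Fin m × Fin m => p.1 < p.2), hamming (P p.1) (P p.2)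

/-- Number of one-bits of a bit string. -/
def onesCount {n : ℕ} (x : Fin n → Bool) : ℕ :=
  (Finset.univ.filter (fun k => x k = true)).card

/-- Number of individuals with a one-bit at position k. -/
def colCount {m n : ℕ} (P : Fin m → Fin n → Bool) (k : Fin n) : ℕ :=
  (Finset.univ.filter (fun i => P i k = true)).card

open Finset

lemma Finset.sum_range_card_le_sum_of_injOn {ι : Type*} (s : Finset ι) (f : ι → ℕ)
    (hf : Set.InjOn f s) : ∑ j ∈ range #s, j ≤ ∑ i ∈ s, f i := by
  classical
  have hf' : Set.InjOn (fun i => (f i : ℤ)) s := Nat.cast_injective.comp_injOn hf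
  have h := sum_range_le_sum (s := s.image fun i => (f i : ℤ)) (c := 0) (by simp)
  rw [card_image_of_injOn hf', sum_image hf'] at h
  have h' : ((∑ j ∈ range #s, j : ℕ) : ℤ) ≤ ∑ i ∈ s, (f i : ℤ) := by
    push_cast; simpa using h
  exact_mod_cast h'

lemma Finset.sum_le_card_filter_mul_add_card_mul {ι : Type*} (s : Finset ι) (p : ι → Prop)
    [DecidablePred p] (f : ι → ℕ) {a b : ℕ} (ha : ∀ i ∈ s, p i → f i ≤ a)
    (hb : ∀ i ∈ s, ¬ p i → f i ≤ b) : ∑ i ∈ s, f i ≤ #(s.filter p) * a + #s * b := by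
  rw [← sum_filter_add_sum_filter_not s p]
  gcongr
  · simpa using sum_le_card_nsmul _ f a fun i hi => ha i (mem_filter.1 hi).1 (mem_filter.1 hi).2
  · calc ∑ i ∈ s with ¬p i, f i ≤ #(s.filter fun i => ¬p i) * b := by
          simpa using sum_le_card_nsmul _ f b fun i hi =>
            hb i (mem_filter.1 hi).1 (mem_filter.1 hi).2
      _ ≤ #s * b := by gcongr; exact filter_subset _ _

lemma Finset.sum_univ_eq_add_add_sum_filter_ne {ι M : Type*} [Fintype ι] [DecidableEq ι]
    [AddCommMonoid M] {a b : ι} (hab : a ≠ b) (f : ι → M) :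
    ∑ i, f i = f a + f b + ∑ i with i ≠ a ∧ i ≠ b, f i := by
  have : univ.filter (fun i => ¬(i ≠ a ∧ i ≠ b)) = {a, b} := by ext; simp; tauto
  rw [← sum_filter_add_sum_filter_not univ fun i => i ≠ a ∧ i ≠ b, this, sum_pair hab,
    add_comm]

lemma card_filter_eq_false_add_onesCount {n : ℕ} (x : Fin n → Bool) :
    #{k | x k = false} + onesCount x = n := by
  simpa [onesCount, add_comm] using card_filter_add_card_filter_not (s := univ) fun k => x k = true

lemma card_filter_eq_false_add_colCount_le {m n : ℕ} (P : Fin m → Fin n → Bool)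
    (S : Finset (Fin m)) (k : Fin n) : #(S.filter fun i => P i k = false) + colCount P k ≤ m := by
  have hsplit := card_filter_add_card_filter_not (s := univ) fun i => P i k = false
  simp only [Bool.not_eq_false, card_univ, Fintype.card_fin] at hsplit
  have := card_le_card (filter_subset_filter (fun i => P i k = false) (subset_univ S))
  unfold colCount
  omega

lemma sum_range_card_le_sum_card_filter_eq_false {n : ℕ} (x : Fin (n + 1) → Fin n → Bool)
    (hlevels : ∀ i : Fin (n + 1), onesCount (x i) = i) (S : Finset (Fin (n + 1))) :
    ∑ j ∈ range #S, j ≤ ∑ k, #(S.filter fun i => x i k = false) := by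
  have hzeros : ∀ i, #{k | x i k = false} = n - i := fun i => by
    have := card_filter_eq_false_add_onesCount (x i); have := hlevels i; omega
  have hinj : Set.InjOn (fun i : Fin (n + 1) => n - i) S := fun a _ b _ h => by
    have := a.isLt; have := b.isLt; exact Fin.ext (by simp at h; omega)
  calc ∑ j ∈ range #S, j ≤ ∑ i ∈ S, (n - i) := sum_range_card_le_sum_of_injOn S _ hinj
    _ = ∑ i ∈ S, #{k | x i k = false} := by simp only [hzeros]
    _ = ∑ k, #(S.filter fun i => x i k = false) :=
      sum_card_bipartiteAbove_eq_sum_card_bipartiteBelow _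

lemma two_mul_add_one_le_eight_mul {t b c : ℕ} (ht : 2 ≤ t) (hb : b ≤ 2 * t)
    (h : ∑ j ∈ range (t + 2), j ≤ (t + 2) + c * (t + 1) + b * (t / 8)) :
    2 * t + 1 ≤ 8 * c := by
  have hgauss : (∑ j ∈ range (t + 2), j) * 2 = (t + 2) * (t + 1) := sum_range_id_mul_two (t + 2)
  have hb' : b * (t / 8) ≤ 2 * t * (t / 8) := Nat.mul_le_mul_right _ hb
  by_contra! hc
  rcases Nat.eq_zero_or_pos (t / 8) with hq | hq
  · rw [hq] at hb'; nlinarith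
  · have : 8 * (t / 8) ≤ t := Nat.mul_div_le t 8
    nlinarith

theorem stmt13_general (n : ℕ) (hn : Odd n) (hn5 : 5 ≤ n) (x : Fin (n + 1) → Fin n → Bool)
    (hlevels : ∀ i : Fin (n + 1), onesCount (x i) = i)
    (hot cold : Fin n) (hne : hot ≠ cold)
    (hhot : colCount x hot = (n + 3) / 2)
    (hbal : ∀ k : Fin n, k ≠ hot → k ≠ cold → colCount x k = (n + 1) / 2) :
    (n : ℝ) / 8 ≤
      ((Finset.univ.filter (fun k : Fin n => k ≠ hot ∧ k ≠ cold ∧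
        (n : ℝ) / 16 ≤
          ((Finset.univ.filter
            (fun i : Fin (n + 1) => x i hot = true ∧ x i k = false)).card : ℝ))).card : ℝ) := by
  obtain ⟨t, rfl⟩ := hn
  let S := univ.filter fun i => x i hot = true
  let Z (k : Fin (2 * t + 1)) : ℕ := #(S.filter fun i => x i k = false)
  let B := univ.filter fun k => k ≠ hot ∧ k ≠ cold
  let C := B.filter fun k => ((2 * t + 1 : ℕ) : ℝ) / 16 ≤ Z k
  have hS : #S = t + 2 := by rw [show #S = colCount x hot from rfl, hhot]; omega
  have hB : #B < 2 * t + 1 := by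
    simpa using card_lt_univ_of_notMem (s := B) (x := hot) (by simp [B])
  have hZbal : ∀ k ∈ B, Z k ≤ t + 1 := fun k hk => by
    have : Z k + colCount x k ≤ 2 * t + 1 + 1 := card_filter_eq_false_add_colCount_le x S k
    have := hbal k (mem_filter.1 hk).2.1 (mem_filter.1 hk).2.2
    omega
  have hZsmall : ∀ k ∈ B, ¬((2 * t + 1 : ℕ) : ℝ) / 16 ≤ Z k → Z k ≤ t / 8 := by
    intro k _ hk
    have : ((16 * Z k : ℕ) : ℝ) < (2 * t + 1 : ℕ) := by push_cast at hk ⊢; linarith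
    have := Nat.cast_lt.1 this
    omega
  have hsum : ∑ k, Z k ≤ (t + 2) + #C * (t + 1) + #B * (t / 8) := by
    rw [sum_univ_eq_add_add_sum_filter_ne hne, (by simp [Z, S] : Z hot = 0), zero_add,
      add_assoc]
    gcongr
    · exact hS ▸ card_filter_le _ _
    · exact sum_le_card_filter_mul_add_card_mul B _ Z (fun k hk _ => hZbal k hk) hZsmall
  have hlow : ∑ j ∈ range (t + 2), j ≤ ∑ k, Z k :=
    hS ▸ sum_range_card_le_sum_card_filter_eq_false x hlevels S
  have := two_mul_add_one_le_eight_mul (by omega) (by omega) (hlow.trans hsum)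
  rw [show univ.filter _ = C by simp only [C, B, Z, S, filter_filter, and_assoc],
    div_le_iff₀ (by norm_num)]
  exact_mod_cast (by omega : 2 * t + 1 ≤ #C * 8)

theorem stmt13 (n : ℕ) (hn : Odd n) (hn5 : 5 ≤ n) (x : Fin (n + 1) → Fin n → Bool)
    (hlevels : ∀ i : Fin (n + 1), onesCount (x i) = i)
    (hot cold : Fin n) (hne : hot ≠ cold)
    (hhot : colCount x hot = (n + 3) / 2) (hcold : colCount x cold = (n - 1) / 2)
    (hbal : ∀ k : Fin n, k ≠ hot → k ≠ cold → colCount x k = (n + 1) / 2) :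
    (n : ℝ) / 8 ≤
      ((Finset.univ.filter (fun k : Fin n => k ≠ hot ∧ k ≠ cold ∧
        (n : ℝ) / 16 ≤
          ((Finset.univ.filter
            (fun i : Fin (n + 1) => x i hot = true ∧ x i k = false)).card : ℝ))).card : ℝ) :=
  stmt13_general n hn hn5 x hlevels hot cold hne hhot hbal
end

section
/- In an almost balanced population P (n odd), if an individual x_i has a one-bit in the cold position and a zero-bit in the hot position, then replacing x_i by any other bit string with exactly i one-bits strictly decreases the total Hamming distance of the population. -/
/-!
Counting disagreeing pairs column by column, the total Hamming distance of `m = n + 1` strings is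
`∑ₖ cₖ (m - cₖ)`, where `cₖ` is the number of ones in column `k`; each summand is a concave
function of `cₖ`, largest at `cₖ = m / 2`. Replacing `xᵢ` by `y` changes `cₖ` by `yₖ - xᵢₖ`. Since `xᵢ` has a one in the cold
column and a zero in the hot one, no column count moves towards `(n + 1) / 2`: a balanced column
can only leave balance, the hot column can only gain a one, the cold column only lose one. So no
summand increases, and as `y ≠ xᵢ` some column count changes, which strictly lowers its summand.
-/

open Finset

lemma card_pairs_lt_ne_eq_mul {α : Type*} [Fintype α] [LinearOrder α] (f : α → Bool) :
    #{p : α × α | p.1 < p.2 ∧ f p.1 ≠ f p.2} = #{a | f a} * #{a | ¬ f a} := by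
  rw [← card_product]
  refine card_nbij' (fun p => if f p.1 then p else p.swap)
    (fun q => if q.1 < q.2 then q else q.swap) ?_ ?_ ?_ ?_ <;> intro p <;> grind

lemma totalHamming_eq_sum_colCount {m n : ℕ} (P : Fin m → Fin n → Bool) :
    totalHamming P = ∑ k, colCount P k * (m - colCount P k) := by
  simp only [totalHamming, hamming, card_filter]
  rw [sum_comm]
  refine sum_congr rfl fun k _ => ?_
  have hcompl := card_filter_add_card_filter_not (s := univ) (fun j : Fin m => P j k)
  rw [card_univ, Fintype.card_fin] at hcompl
  rw [sum_boole, Nat.cast_id, filter_filter, card_pairs_lt_ne_eq_mul (P · k), colCount]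
  congr
  omega

lemma colCount_le {m n : ℕ} (P : Fin m → Fin n → Bool) (k : Fin n) : colCount P k ≤ m :=
  (card_filter_le _ _).trans_eq (card_fin m)

lemma colCount_eq_sum_toNat {m n : ℕ} (P : Fin m → Fin n → Bool) (k : Fin n) :
    colCount P k = ∑ j, (P j k).toNat := by
  rw [colCount, card_filter]
  congr! with j
  cases P j k <;> rfl

lemma colCount_update_add {m n : ℕ} (P : Fin m → Fin n → Bool) (i : Fin m) (y : Fin n → Bool)
    (k : Fin n) :
    colCount (Function.update P i y) k + (P i k).toNat = colCount P k + (y k).toNat := by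
  simp only [colCount_eq_sum_toNat, ← add_sum_erase _ _ (mem_univ i), Function.update_self]
  rw [sum_congr rfl fun j hj => by rw [Function.update_of_ne (ne_of_mem_erase hj)]]
  ring

lemma exists_colCount_update_ne {m n : ℕ} {P : Fin m → Fin n → Bool} {i : Fin m}
    {y : Fin n → Bool} (hy : y ≠ P i) :
    ∃ k, colCount (Function.update P i y) k ≠ colCount P k := by
  contrapose! hy
  funext k
  have h := colCount_update_add P i y k
  rw [hy k, add_right_inj] at h
  revert h
  cases y k <;> cases P i k <;> simp

lemma mul_tsub_lt_of_farther {m c c' : ℕ} (hc' : c' ≤ m)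
    (hfar : m ≤ 2 * c ∧ c ≤ c' ∨ c' ≤ c ∧ 2 * c ≤ m) (hne : c' ≠ c) :
    c' * (m - c') < c * (m - c) := by
  have hc : c ≤ m := by omega
  zify [hc, hc'] at *
  -- c' (m - c') - c (m - c) = (c' - c) (m - c - c'), and the two factors have opposite signs
  rcases hfar with ⟨h1, h2⟩ | ⟨h1, h2⟩
  · have : (c : ℤ) < c' := lt_of_le_of_ne h2 (Ne.symm hne)
    nlinarith
  · have : (c' : ℤ) < c := lt_of_le_of_ne h1 hne
    nlinarith

lemma mul_tsub_le_of_farther {m c c' : ℕ} (hc' : c' ≤ m)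
    (hfar : m ≤ 2 * c ∧ c ≤ c' ∨ c' ≤ c ∧ 2 * c ≤ m) : c' * (m - c') ≤ c * (m - c) := by
  rcases eq_or_ne c' c with rfl | hne
  · rfl
  · exact (mul_tsub_lt_of_farther hc' hfar hne).le

theorem stmt15_general (n : ℕ) (hn : Odd n) (x : Fin (n + 1) → Fin n → Bool)
    (hot cold : Fin n)
    (hhot : colCount x hot = (n + 3) / 2) (hcold : colCount x cold = (n - 1) / 2)
    (hbal : ∀ k : Fin n, k ≠ hot → k ≠ cold → colCount x k = (n + 1) / 2)
    (i : Fin (n + 1)) (hic : x i cold = true) (hih : x i hot = false)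
    (y : Fin n → Bool) (hyne : y ≠ x i) :
    totalHamming (Function.update x i y) < totalHamming x := by
  set x' := Function.update x i y
  have hfar (k : Fin n) : n + 1 ≤ 2 * colCount x k ∧ colCount x k ≤ colCount x' k ∨
      colCount x' k ≤ colCount x k ∧ 2 * colCount x k ≤ n + 1 := by
    obtain ⟨t, rfl⟩ := hn
    have hupd : colCount x' k + (x i k).toNat = colCount x k + (y k).toNat :=
      colCount_update_add x i y k
    have := Bool.toNat_le (y k)
    by_cases hk : k = hot
    · subst hk
      rw [hih, Bool.toNat_false] at hupd
      omega
    by_cases hk' : k = cold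
    · subst hk'
      rw [hic, Bool.toNat_true] at hupd
      omega
    · have := hbal k hk hk'
      omega
  obtain ⟨k, hk⟩ := exists_colCount_update_ne hyne
  rw [totalHamming_eq_sum_colCount, totalHamming_eq_sum_colCount]
  exact sum_lt_sum (fun k _ => mul_tsub_le_of_farther (colCount_le x' k) (hfar k))
    ⟨k, mem_univ k, mul_tsub_lt_of_farther (colCount_le x' k) (hfar k) hk⟩

theorem stmt15 (n : ℕ) (hn : Odd n) (x : Fin (n + 1) → Fin n → Bool)
    (hlevels : ∀ j : Fin (n + 1), onesCount (x j) = j)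
    (hot cold : Fin n) (hne : hot ≠ cold)
    (hhot : colCount x hot = (n + 3) / 2) (hcold : colCount x cold = (n - 1) / 2)
    (hbal : ∀ k : Fin n, k ≠ hot → k ≠ cold → colCount x k = (n + 1) / 2)
    (i : Fin (n + 1)) (hic : x i cold = true) (hih : x i hot = false)
    (y : Fin n → Bool) (hy : onesCount y = i) (hyne : y ≠ x i) :
    totalHamming (Function.update x i y) < totalHamming x :=
  stmt15_general n hn x hot cold hhot hcold hbal i hic hih y hyne
end
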